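/- Fix an integer p ≥ 3, a constant C > 0, β > 0 and h ∈ ℝ, and define ξ₀(r) = r²/2 + (C r)^p/p and F_RS(q,β,h) = E[log cosh(β·√(ξ₀'(q))·Z + h)] + (β²/2)·(ξ₀(1) − ξ₀(q) − (1−q)·ξ₀'(q)) for q ∈ [0,1], where Z is a standard Gaussian random variable. Then every global minimizer q* of F_RS(·,β,h) on [0,1] satisfies the self-consistency equation E[tanh²(β·√(ξ₀'(q*))·Z + h)] = q*; that is, every minimizer of the RS functional belongs to the set Q*(β,h). -/

import Mathlib

/-!
Differentiating under the Gaussian integral and integrating by parts,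
`E[Z tanh(aZ + h)] = a E[1 - tanh²(aZ + h)]`, gives wherever `ξ'(q) > 0`
`∂_q F_RS = (β² ξ''(q) / 2) (q - E tanh²(β √ξ'(q) Z + h))`,
so on `(0, 1)` the sign of the derivative is that of `q - E tanh²`. At an interior minimizer the
derivative vanishes. At a minimizer `q = 0` this difference cannot be negative nearby, which forces
`E tanh² ≤ 0`; at `q = 1` it cannot be positive, forcing `E tanh² ≥ 1`. The trivial bounds
`0 ≤ E tanh² ≤ 1` then give equality in every case. Only continuity is needed at `q = 0`, where
`√ξ'` need not be differentiable.
-/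

open Real MeasureTheory ProbabilityTheory

open Set Filter Topology

namespace Real

lemma abs_tanh_le_one (x : ℝ) : |tanh x| ≤ 1 :=
  abs_le.2 ⟨(neg_one_lt_tanh x).le, (tanh_lt_one x).le⟩

lemma tanh_sq_le_one (x : ℝ) : tanh x ^ 2 ≤ 1 :=
  (sq_le_one_iff_abs_le_one _).2 (abs_tanh_le_one x)

lemma hasDerivAt_tanh (x : ℝ) : HasDerivAt tanh (1 - tanh x ^ 2) x := by
  have h := (hasDerivAt_sinh x).div (hasDerivAt_cosh x) (cosh_pos x).ne'
  rw [show sinh / cosh = tanh from funext fun y => (tanh_eq_sinh_div_cosh y).symm] at h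
  refine h.congr_deriv ?_
  have hc := (cosh_pos x).ne'
  rw [tanh_eq_sinh_div_cosh]
  field_simp

@[fun_prop]
lemma continuous_tanh : Continuous tanh :=
  continuous_iff_continuousAt.2 fun x => (hasDerivAt_tanh x).continuousAt

lemma hasDerivAt_log_cosh (x : ℝ) : HasDerivAt (fun y => log (cosh y)) (tanh x) x := by
  simpa [← tanh_eq_sinh_div_cosh] using (hasDerivAt_cosh x).log (cosh_pos x).ne'

lemma abs_log_cosh_le_abs (x : ℝ) : |log (cosh x)| ≤ |x| := by
  have hcosh : cosh x ≤ exp |x| := by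
    rw [← cosh_abs, cosh_eq]
    linarith [exp_le_exp.2 (neg_le_self (abs_nonneg x))]
  rw [abs_of_nonneg (log_nonneg (one_le_cosh x))]
  simpa using log_le_log (cosh_pos x) hcosh

end Real

namespace ProbabilityTheory

lemma hasDerivAt_gaussianPDFReal_zero_one (x : ℝ) :
    HasDerivAt (gaussianPDFReal 0 1) (-x * gaussianPDFReal 0 1 x) x := by
  have hφ : gaussianPDFReal 0 1 = fun y => (√(2 * π))⁻¹ * exp (-y ^ 2 / 2) := by
    ext y
    simp [gaussianPDFReal_def]
  have h : HasDerivAt (fun y : ℝ => -y ^ 2 / 2) (-x) x :=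
    ((hasDerivAt_pow 2 x).neg.div_const 2).congr_deriv (by ring)
  rw [hφ]
  exact (h.exp.const_mul _).congr_deriv (by ring)

lemma integrable_gaussianReal_iff {μ : ℝ} {v : NNReal} (hv : v ≠ 0) {f : ℝ → ℝ} :
    Integrable f (gaussianReal μ v) ↔ Integrable (fun x => gaussianPDFReal μ v x * f x) := by
  rw [gaussianReal_of_var_ne_zero μ hv,
    integrable_withDensity_iff_integrable_smul' (measurable_gaussianPDF μ v)
      (ae_of_all _ fun _ => gaussianPDF_lt_top)]
  simp [toReal_gaussianPDF]

lemma integrable_id_gaussianReal {μ : ℝ} {v : NNReal} : Integrable id (gaussianReal μ v) :=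
  (memLp_id_gaussianReal 1).integrable le_rfl

/-- Gaussian integration by parts (Stein's lemma). -/
theorem integral_mul_gaussianReal_eq_integral_deriv {f f' : ℝ → ℝ} {M : ℝ}
    (hf : ∀ x, HasDerivAt f (f' x) x) (hM : ∀ x, |f x| ≤ M)
    (hf' : Integrable f' (gaussianReal 0 1)) :
    ∫ x, x * f x ∂gaussianReal 0 1 = ∫ x, f' x ∂gaussianReal 0 1 := by
  have hf_meas : AEStronglyMeasurable f (gaussianReal 0 1) :=
    (continuous_iff_continuousAt.2 fun x => (hf x).continuousAt).aestronglyMeasurable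
  have hf_int : Integrable f (gaussianReal 0 1) := .of_bound hf_meas M (ae_of_all _ hM)
  have hxf_int : Integrable (fun x => x * f x) (gaussianReal 0 1) :=
    integrable_id_gaussianReal.mul_bdd hf_meas (ae_of_all _ hM)
  rw [integrable_gaussianReal_iff one_ne_zero] at hf_int hxf_int hf'
  simp only [integral_gaussianReal_eq_integral_smul one_ne_zero, smul_eq_mul]
  have := integral_mul_deriv_eq_deriv_mul_of_integrable
    (fun x _ => hasDerivAt_gaussianPDFReal_zero_one x) (fun x _ => hf x) hf'
    (hxf_int.neg.congr (ae_of_all _ fun x => by simp only [Pi.neg_apply, Pi.mul_apply]; ring)) hf_int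
  simp only [neg_mul, integral_neg, neg_neg] at this
  rw [this]
  congr 1 with x
  ring

end ProbabilityTheory

section GaussianTanh

variable (h : ℝ)

local notation "γ" => gaussianReal 0 1

lemma integrable_tanh_sq_gaussianReal (a : ℝ) : Integrable (fun x => tanh (a * x + h) ^ 2) γ :=
  .of_bound (by fun_prop) 1 (ae_of_all _ fun x => by simpa using tanh_sq_le_one (a * x + h))

lemma integral_tanh_sq_gaussianReal_nonneg (a : ℝ) : 0 ≤ ∫ x, tanh (a * x + h) ^ 2 ∂γ :=
  integral_nonneg fun _ => sq_nonneg _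

lemma integral_tanh_sq_gaussianReal_le_one (a : ℝ) : ∫ x, tanh (a * x + h) ^ 2 ∂γ ≤ 1 := by
  simpa using integral_mono (integrable_tanh_sq_gaussianReal h a) (integrable_const 1)
    fun x => tanh_sq_le_one (a * x + h)

lemma continuous_integral_tanh_sq_gaussianReal :
    Continuous fun a => ∫ x, tanh (a * x + h) ^ 2 ∂γ :=
  continuous_of_dominated (bound := fun _ => 1) (fun _ => by fun_prop)
    (fun a => ae_of_all _ fun x => by simpa using tanh_sq_le_one (a * x + h))
    (integrable_const 1) (ae_of_all _ fun _ => by fun_prop)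

lemma integral_mul_tanh_gaussianReal (a : ℝ) :
    ∫ x, x * tanh (a * x + h) ∂γ = a * (1 - ∫ x, tanh (a * x + h) ^ 2 ∂γ) := by
  have hderiv (x : ℝ) :
      HasDerivAt (fun y => tanh (a * y + h)) ((1 - tanh (a * x + h) ^ 2) * a) x :=
    (hasDerivAt_tanh _).comp x
      (((hasDerivAt_id x).const_mul a).add_const h |>.congr_deriv (mul_one a))
  have hint := integrable_tanh_sq_gaussianReal h a
  rw [integral_mul_gaussianReal_eq_integral_deriv hderiv (fun x => abs_tanh_le_one _)
    (((integrable_const 1).sub hint).mul_const a), integral_mul_const,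
    integral_sub (integrable_const 1) hint]
  simp only [integral_const, probReal_univ, smul_eq_mul, one_mul]
  ring

lemma hasDerivAt_integral_log_cosh_gaussianReal (a : ℝ) :
    HasDerivAt (fun a => ∫ x, log (cosh (a * x + h)) ∂γ)
      (a * (1 - ∫ x, tanh (a * x + h) ^ 2 ∂γ)) a := by
  rw [← integral_mul_tanh_gaussianReal]
  have hint : Integrable (fun x => log (cosh (a * x + h))) γ :=
    ((integrable_id_gaussianReal.const_mul a).add (integrable_const h)).abs.mono'
      (Measurable.aestronglyMeasurable (by fun_prop)) (ae_of_all _ fun x => abs_log_cosh_le_abs _)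
  refine (hasDerivAt_integral_of_dominated_loc_of_deriv_le (s := univ)
    (F' := fun a x => x * tanh (a * x + h)) (bound := fun x => |x|) univ_mem
    (Eventually.of_forall fun _ => Measurable.aestronglyMeasurable (by fun_prop)) hint
    (by fun_prop)
    (ae_of_all _ fun x b _ => ?_) integrable_id_gaussianReal.abs
    (ae_of_all _ fun x b _ => ?_)).2
  · simpa [abs_mul] using mul_le_of_le_one_right (abs_nonneg x) (abs_tanh_le_one (b * x + h))
  · exact (hasDerivAt_log_cosh _).comp b (((hasDerivAt_id b).mul_const x).add_const h
      |>.congr_deriv (one_mul x)) |>.congr_deriv (mul_comm _ _)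

end GaussianTanh

section MinimizerSign

variable {f c k : ℝ → ℝ} {a b x : ℝ}

lemma IsMinOn.nonneg_of_hasDerivAt_eq_pos_mul (hmin : IsMinOn f (Icc a b) x) (hx : x ∈ Ico a b)
    (hf : ContinuousOn f (Icc a b)) (hk : ContinuousOn k (Icc a b))
    (hc : ∀ y ∈ Ioo a b, 0 < c y) (hderiv : ∀ y ∈ Ioo a b, HasDerivAt f (c y * k y) y) :
    0 ≤ k x := by
  by_contra! hkx
  have hIcc : Icc a b ∈ 𝓝[≥] x := Icc_mem_nhdsGE_of_mem hx
  obtain ⟨u, hxu : x < u, hu⟩ := mem_nhdsGE_iff_exists_Ico_subset.1 <| inter_mem hIcc <|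
    ((hk x (Ico_subset_Icc_self hx)).mono_of_mem_nhdsWithin hIcc).eventually (gt_mem_nhds hkx)
  obtain ⟨r, hxr, hru⟩ := exists_between hxu
  replace hru : Icc x r ⊆ Ico x u := Icc_subset_Ico_right hru
  have hanti : StrictAntiOn f (Icc x r) := by
    refine strictAntiOn_of_deriv_neg (convex_Icc x r) (hf.mono fun y hy => (hu (hru hy)).1) ?_
    rw [interior_Icc]
    intro y hy
    have hky := hu (hru (Ioo_subset_Icc_self hy))
    have hyab : y ∈ Ioo a b :=
      ⟨hx.1.trans_lt hy.1, hy.2.trans_le (hu (hru (right_mem_Icc.2 hxr.le))).1.2⟩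
    rw [(hderiv y hyab).deriv]
    exact mul_neg_of_pos_of_neg (hc y hyab) hky.2
  exact (hanti (left_mem_Icc.2 hxr.le) (right_mem_Icc.2 hxr.le) hxr).not_ge
    (hmin (hu (hru (right_mem_Icc.2 hxr.le))).1)

lemma IsMinOn.nonpos_of_hasDerivAt_eq_pos_mul (hmin : IsMinOn f (Icc a b) x) (hx : x ∈ Ioc a b)
    (hf : ContinuousOn f (Icc a b)) (hk : ContinuousOn k (Icc a b))
    (hc : ∀ y ∈ Ioo a b, 0 < c y) (hderiv : ∀ y ∈ Ioo a b, HasDerivAt f (c y * k y) y) :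
    k x ≤ 0 := by
  have hneg : MapsTo Neg.neg (Icc (-b) (-a)) (Icc a b) := fun y hy =>
    ⟨le_neg.1 hy.2, neg_le.1 hy.1⟩
  have hneg' : MapsTo Neg.neg (Ioo (-b) (-a)) (Ioo a b) := fun y hy =>
    ⟨lt_neg.1 hy.2, neg_lt.1 hy.1⟩
  have hmin' : IsMinOn (fun y => f (-y)) (Icc (-b) (-a)) (-x) := fun y hy => by
    simpa using hmin (hneg hy)
  have := hmin'.nonneg_of_hasDerivAt_eq_pos_mul (k := fun y => -k (-y)) (c := fun y => c (-y))
    ⟨neg_le_neg hx.2, neg_lt_neg hx.1⟩ (hf.comp continuousOn_neg hneg)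
    (hk.comp continuousOn_neg hneg).neg (fun y hy => hc _ (hneg' hy))
    fun y hy => ((hderiv _ (hneg' hy)).comp y (hasDerivAt_neg y)).congr_deriv (by ring)
  simpa using this

end MinimizerSign

noncomputable def rsFunctional (ξ : ℝ → ℝ) (β h q : ℝ) : ℝ :=
  (∫ x, log (cosh (β * √(deriv ξ q) * x + h)) ∂gaussianReal 0 1)
    + β ^ 2 / 2 * (ξ 1 - ξ q - (1 - q) * deriv ξ q)

-- `Q*(β, h)` is the set of fixed points of `rsOverlap ξ β h` in `[0, 1]`.
noncomputable def rsOverlap (ξ : ℝ → ℝ) (β h q : ℝ) : ℝ :=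
  ∫ x, tanh (β * √(deriv ξ q) * x + h) ^ 2 ∂gaussianReal 0 1

section ReplicaSymmetric

variable {ξ : ℝ → ℝ} (β h : ℝ)

lemma continuous_rsOverlap (hξ' : Continuous (deriv ξ)) : Continuous (rsOverlap ξ β h) :=
  (continuous_integral_tanh_sq_gaussianReal h).comp (continuous_const.mul hξ'.sqrt)

lemma continuous_rsFunctional (hξ : Continuous ξ) (hξ' : Continuous (deriv ξ)) :
    Continuous (rsFunctional ξ β h) := by
  have hG : Continuous fun a => ∫ x, log (cosh (a * x + h)) ∂gaussianReal 0 1 :=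
    continuous_iff_continuousAt.2 fun a =>
      (hasDerivAt_integral_log_cosh_gaussianReal h a).continuousAt
  exact (hG.comp (continuous_const.mul hξ'.sqrt)).add (by fun_prop)

theorem hasDerivAt_rsFunctional (hξ : Differentiable ℝ ξ) (hξ' : Differentiable ℝ (deriv ξ))
    {q : ℝ} (hq : 0 < deriv ξ q) :
    HasDerivAt (rsFunctional ξ β h)
      (β ^ 2 * deriv (deriv ξ) q / 2 * (q - rsOverlap ξ β h q)) q := by
  have ha : HasDerivAt (fun q => β * √(deriv ξ q))
      (β * (deriv (deriv ξ) q / (2 * √(deriv ξ q)))) q :=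
    ((hξ' q).hasDerivAt.sqrt hq.ne').const_mul β
  have hG := (hasDerivAt_integral_log_cosh_gaussianReal h _).comp q ha
  have hpoly := (((hasDerivAt_const q (ξ 1)).sub (hξ q).hasDerivAt).sub
    (((hasDerivAt_id' q).const_sub 1).mul (hξ' q).hasDerivAt)).const_mul (β ^ 2 / 2)
  refine (hG.add hpoly).congr_deriv ?_
  -- the factor `a = β √ξ'(q)` of the outer derivative cancels the `√ξ'(q)` of the inner one
  have : √(deriv ξ q) ≠ 0 := (Real.sqrt_pos.2 hq).ne'
  unfold rsOverlap
  field_simp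
  ring

theorem rsOverlap_eq_of_isMinOn (hξ : Differentiable ℝ ξ) (hξ' : Differentiable ℝ (deriv ξ))
    (hξ'_pos : ∀ q ∈ Ioo 0 1, 0 < deriv ξ q)
    (hξ''_pos : ∀ q ∈ Ioo 0 1, 0 < deriv (deriv ξ) q)
    {β : ℝ} (hβ : β ≠ 0) (h : ℝ) {q : ℝ} (hq : q ∈ Icc 0 1)
    (hmin : IsMinOn (rsFunctional ξ β h) (Icc 0 1) q) :
    rsOverlap ξ β h q = q := by
  have hF : ContinuousOn (rsFunctional ξ β h) (Icc 0 1) :=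
    (continuous_rsFunctional β h hξ.continuous hξ'.continuous).continuousOn
  have hk : ContinuousOn (fun y => y - rsOverlap ξ β h y) (Icc 0 1) :=
    (continuous_id.sub (continuous_rsOverlap β h hξ'.continuous)).continuousOn
  have hc (y : ℝ) (hy : y ∈ Ioo 0 1) : 0 < β ^ 2 * deriv (deriv ξ) y / 2 := by
    have hξ'' := hξ''_pos y hy
    positivity
  have hderiv (y : ℝ) (hy : y ∈ Ioo (0 : ℝ) 1) :=
    hasDerivAt_rsFunctional β h hξ hξ' (hξ'_pos y hy)
  apply le_antisymm
  · rcases hq.2.lt_or_eq with hq1 | rfl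
    · exact sub_nonneg.1 (hmin.nonneg_of_hasDerivAt_eq_pos_mul ⟨hq.1, hq1⟩ hF hk hc hderiv)
    · exact integral_tanh_sq_gaussianReal_le_one h _
  · rcases hq.1.eq_or_lt with rfl | hq0
    · exact integral_tanh_sq_gaussianReal_nonneg h _
    · exact sub_nonpos.1 (hmin.nonpos_of_hasDerivAt_eq_pos_mul ⟨hq0, hq.2⟩ hF hk hc hderiv)

end ReplicaSymmetric

lemma hasDerivAt_mixture {p : ℕ} (hp : p ≠ 0) (C r : ℝ) :
    HasDerivAt (fun r : ℝ => r ^ 2 / 2 + (C * r) ^ p / p) (r + C ^ p * r ^ (p - 1)) r := by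
  refine (((hasDerivAt_pow 2 r).div_const 2).add
    ((((hasDerivAt_id' r).const_mul C).pow p).div_const p)).congr_deriv ?_
  rw [mul_pow, ← pow_sub_one_mul hp C]
  field_simp
  ring

lemma hasDerivAt_mixture_deriv (p : ℕ) (C r : ℝ) :
    HasDerivAt (fun r : ℝ => r + C ^ p * r ^ (p - 1))
      (1 + C ^ p * ((p - 1 : ℕ) * r ^ (p - 1 - 1))) r :=
  (hasDerivAt_id' r).add ((hasDerivAt_pow (p - 1) r).const_mul _)

/-- For `p ≥ 3`, `C > 0`, `β > 0`, `h ∈ ℝ`, `ξ₀ r = r²/2 + (C r)^p/p` and the RS functional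
`F_RS(q) = E[log cosh(β √(ξ₀'(q)) Z + h)] + (β²/2)(ξ₀(1) - ξ₀(q) - (1-q) ξ₀'(q))`,
every global minimizer `q*` of `F_RS` on `[0,1]` satisfies the self-consistency equation
`E[tanh²(β √(ξ₀'(q*)) Z + h)] = q*`, i.e. belongs to `Q*(β,h)`. -/
theorem stmt_10 (p : ℕ) (hp : 3 ≤ p) (C β h : ℝ) (hC : 0 < C) (hβ : 0 < β) :
    let ξ₀ : ℝ → ℝ := fun r => r ^ 2 / 2 + (C * r) ^ p / p
    let F : ℝ → ℝ := fun q =>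
      (∫ x, Real.log (Real.cosh (β * Real.sqrt (deriv ξ₀ q) * x + h)) ∂(gaussianReal 0 1))
        + β ^ 2 / 2 * (ξ₀ 1 - ξ₀ q - (1 - q) * deriv ξ₀ q)
    ∀ q' ∈ Set.Icc (0 : ℝ) 1, (∀ q ∈ Set.Icc (0 : ℝ) 1, F q' ≤ F q) →
      ∫ x, Real.tanh (β * Real.sqrt (deriv ξ₀ q') * x + h) ^ 2 ∂(gaussianReal 0 1) = q' := by
  intro ξ₀ F q hq hmin
  have hξ₀ (r : ℝ) := hasDerivAt_mixture (p := p) (by omega) C r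
  have hξ₀' : deriv ξ₀ = fun r => r + C ^ p * r ^ (p - 1) := funext fun r => (hξ₀ r).deriv
  have hξ₀'' (r : ℝ) :
      deriv (deriv ξ₀) r = 1 + C ^ p * ((p - 1 : ℕ) * r ^ (p - 1 - 1)) := by
    rw [hξ₀']
    exact (hasDerivAt_mixture_deriv p C r).deriv
  refine rsOverlap_eq_of_isMinOn (fun r => (hξ₀ r).differentiableAt) ?_ (fun r hr => ?_)
    (fun r hr => ?_) hβ.ne' h hq (isMinOn_iff.2 hmin)
  · rw [hξ₀']
    exact fun r => (hasDerivAt_mixture_deriv p C r).differentiableAt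
  · have hr0 : 0 < r := hr.1
    rw [hξ₀']
    positivity
  · have hr0 : 0 < r := hr.1
    rw [hξ₀'']
    positivity
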